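/- arXiv:2112.11901 — 2 statements merged into one kernel-verified Lean document; each statement's English description precedes it below -/
import Mathlib

section
/- One-parameter case (Remark 3.3). Let ε ≥ 0 and let M, N : R → vec be finitely presentable one-parameter persistence modules that are ε-interleaved. Let 0 → P_1 → P_0 → M → 0 and 0 → Q_1 → Q_0 → N → 0 be minimal free resolutions of M and N. Then there exists a 2ε-bijection between the multiset ℬ(P_0) ∪ ℬ(Q_1) and the multiset ℬ(Q_0) ∪ ℬ(P_1); in other words, d̂_B(ℬβ(M), ℬβ(N)) ≤ 2·d_I(M,N) for one-parameter persistence modules. -/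
set_option linter.unusedVariables false
set_option maxHeartbeats 800000

open scoped Classical ENNReal

noncomputable section

/-- Points of `R^n`. The metric on `Fin n → ℝ` is the sup-metric, so `dist` is `‖·‖_∞`. -/
abbrev Pt (n : ℕ) := Fin n → ℝ

/-- An `n`-parameter persistence module: a functor from the poset `R^n`
to finite-dimensional `k`-vector spaces. -/
structure PersMod (k : Type) [Field k] (n : ℕ) where
  X : Pt n → Type
  [acg : ∀ r, AddCommGroup (X r)]
  [mod : ∀ r, Module k (X r)]
  [fd : ∀ r, FiniteDimensional k (X r)]
  map : ∀ {r s : Pt n}, r ≤ s → (X r →ₗ[k] X s)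
  map_id : ∀ r : Pt n, map (le_refl r) = LinearMap.id
  map_comp : ∀ {r s t : Pt n} (h₁ : r ≤ s) (h₂ : s ≤ t),
    (map h₂).comp (map h₁) = map (h₁.trans h₂)

attribute [instance] PersMod.acg PersMod.mod PersMod.fd

variable {k : Type} [Field k] {n : ℕ}

/-- A morphism of persistence modules: a natural transformation. -/
structure PersHom (M N : PersMod k n) where
  app : ∀ r, M.X r →ₗ[k] N.X r
  natural : ∀ {r s : Pt n} (h : r ≤ s),
    (N.map h).comp (app r) = (app s).comp (M.map h)

def shiftPt (ε : ℝ) (r : Pt n) : Pt n := fun i => r i + ε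

lemma shiftPt_mono {ε : ℝ} {r s : Pt n} (h : r ≤ s) : shiftPt ε r ≤ shiftPt ε s :=
  fun i => add_le_add (h i) (le_refl ε)

lemma le_shiftPt {ε : ℝ} (hε : 0 ≤ ε) (r : Pt n) : r ≤ shiftPt ε r :=
  fun i => le_add_of_nonneg_right hε

/-- The `ε`-shift of a persistence module. -/
def PersMod.shift (M : PersMod k n) (ε : ℝ) : PersMod k n where
  X r := M.X (shiftPt ε r)
  map h := M.map (shiftPt_mono h)
  map_id r := M.map_id _
  map_comp h₁ h₂ := M.map_comp _ _

/-- `M` and `N` are `ε`-interleaved. -/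
def Interleaved (ε : ℝ) (M N : PersMod k n) : Prop :=
  ∃ hε : 0 ≤ ε,
  ∃ (f : PersHom M (N.shift ε)) (g : PersHom N (M.shift ε)),
    (∀ r : Pt n, (g.app (shiftPt ε r)).comp (f.app r)
        = M.map ((le_shiftPt hε r).trans (le_shiftPt hε _))) ∧
    (∀ r : Pt n, (f.app (shiftPt ε r)).comp (g.app r)
        = N.map ((le_shiftPt hε r).trans (le_shiftPt hε _)))

/-- The interleaving distance. -/
def interleavingDist (M N : PersMod k n) : ℝ≥0∞ :=
  sInf { e : ℝ≥0∞ | ∃ ε : ℝ, e = ENNReal.ofReal ε ∧ Interleaved ε M N }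

/-- The free persistence module `⊕_i F_{L i}`, where `F_j` is the "upset" interval module
generated at `j`. -/
def freeModFin {m : ℕ} (L : Fin m → Pt n) : PersMod k n where
  X r := {i : Fin m // L i ≤ r} → k
  map {r s} h :=
    { toFun := fun f i => if h' : L i.1 ≤ r then f ⟨i.1, h'⟩ else 0
      map_add' := by
        intro f g; funext i
        by_cases h' : L i.1 ≤ r <;> simp [h']
      map_smul' := by
        intro c f; funext i
        by_cases h' : L i.1 ≤ r <;> simp [h'] }
  map_id r := by
    apply LinearMap.ext; intro f; funext i
    show (if h' : L i.1 ≤ r then f ⟨i.1, h'⟩ else 0) = f i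
    rw [dif_pos i.2]
  map_comp {r s t} h₁ h₂ := by
    apply LinearMap.ext; intro f; funext i
    show (if hs : L i.1 ≤ s then
            (if hr : L i.1 ≤ r then f ⟨i.1, hr⟩ else 0) else 0)
        = (if hr : L i.1 ≤ r then f ⟨i.1, hr⟩ else 0)
    by_cases hr : L i.1 ≤ r
    · simp [hr, hr.trans h₁]
    · simp [hr]

/-- Isomorphism of persistence modules. -/
def PersIso (M N : PersMod k n) : Prop :=
  ∃ (f : PersHom M N) (g : PersHom N M),
    (∀ r, (g.app r).comp (f.app r) = LinearMap.id) ∧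
    (∀ r, (f.app r).comp (g.app r) = LinearMap.id)

/-- `P` is free of finite rank with barcode `B`. -/
def IsFreeWith (P : PersMod k n) (B : Multiset (Pt n)) : Prop :=
  ∃ (m : ℕ) (L : Fin m → Pt n), B = (List.ofFn L : Multiset (Pt n)) ∧ PersIso P (freeModFin L)

/-- `M` is finitely presentable: it is (isomorphic to) the cokernel of a morphism
between free modules of finite rank. -/
def FinitelyPresentable (M : PersMod k n) : Prop :=
  ∃ (c r : ℕ) (Lc : Fin c → Pt n) (Lr : Fin r → Pt n)
    (f : PersHom (freeModFin Lc) (freeModFin Lr)) (g : PersHom (freeModFin Lr) M),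
    (∀ x, Function.Surjective (g.app x)) ∧
    (∀ x, LinearMap.range (f.app x) = LinearMap.ker (g.app x))

/-- A resolution of `M` of length `len`:
an exact sequence `0 → P_len → ⋯ → P_0 → M → 0` (encoded with `P j = 0` for `j > len`). -/
structure Res (M : PersMod k n) where
  len : ℕ
  P : ℕ → PersMod k n
  d : ∀ j : ℕ, PersHom (P (j + 1)) (P j)
  aug : PersHom (P 0) M
  aug_surj : ∀ r, Function.Surjective (aug.app r)
  exact_zero : ∀ r, LinearMap.range ((d 0).app r) = LinearMap.ker (aug.app r)
  exact_succ : ∀ (j : ℕ) (r), LinearMap.range ((d (j + 1)).app r) = LinearMap.ker ((d j).app r)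
  vanish : ∀ j, len < j → ∀ r, ∀ x : (P j).X r, x = 0

/-- Projectivity in the category of persistence modules
(where epimorphisms are the pointwise surjections). -/
def IsProjectiveMod (P : PersMod k n) : Prop :=
  ∀ (A B : PersMod k n) (e : PersHom A B), (∀ r, Function.Surjective (e.app r)) →
    ∀ f : PersHom P B, ∃ g : PersHom P A, ∀ r, (e.app r).comp (g.app r) = f.app r

/-- An `ε`-bijection between two multisets of points of `R^n`. -/
def IsMatching (ε : ℝ) (B C : Multiset (Pt n)) : Prop :=
  ∃ m : Multiset (Pt n × Pt n),
    m.map Prod.fst = B ∧ m.map Prod.snd = C ∧ ∀ p ∈ m, dist p.1 p.2 ≤ ε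

/-- The bottleneck distance between barcodes. -/
def bottleneckDist (B C : Multiset (Pt n)) : ℝ≥0∞ :=
  sInf { e : ℝ≥0∞ | ∃ ε : ℝ, 0 ≤ ε ∧ e = ENNReal.ofReal ε ∧ IsMatching ε B C }

/-- A signed barcode: a pair (positive part, negative part) of barcodes. -/
abbrev SignedBarcode (n : ℕ) := Multiset (Pt n) × Multiset (Pt n)

/-- The bottleneck dissimilarity on signed barcodes. -/
def dBhat (B C : SignedBarcode n) : ℝ≥0∞ :=
  bottleneckDist (B.1 + C.2) (C.1 + B.2)

/-- Binary direct sum of persistence modules. -/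
def PersMod.dsum (M N : PersMod k n) : PersMod k n where
  X r := M.X r × N.X r
  map h := (M.map h).prodMap (N.map h)
  map_id r := by
    apply LinearMap.ext; intro x
    show (M.map (le_refl r) x.1, N.map (le_refl r) x.2) = x
    rw [M.map_id, N.map_id]; rfl
  map_comp {r s t} h₁ h₂ := by
    apply LinearMap.ext; intro x
    show (M.map h₂ (M.map h₁ x.1), N.map h₂ (N.map h₁ x.2))
        = (M.map (h₁.trans h₂) x.1, N.map (h₁.trans h₂) x.2)
    rw [← M.map_comp h₁ h₂, ← N.map_comp h₁ h₂]; rfl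

/-- Finite direct sum of persistence modules. -/
def dsumFin {m : ℕ} (P : Fin m → PersMod k n) : PersMod k n where
  X r := ∀ j, (P j).X r
  map h := LinearMap.pi fun j => ((P j).map h).comp (LinearMap.proj j)
  map_id r := by
    apply LinearMap.ext; intro x; funext j
    show (P j).map (le_refl r) (x j) = x j
    rw [(P j).map_id]; rfl
  map_comp {r s t} h₁ h₂ := by
    apply LinearMap.ext; intro x; funext j
    show (P j).map h₂ ((P j).map h₁ (x j)) = (P j).map (h₁.trans h₂) (x j)
    rw [← (P j).map_comp h₁ h₂]; rfl

/-- The zero persistence module. -/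
def zeroMod : PersMod k n := freeModFin (fun i : Fin 0 => i.elim0)

/-- The Hilbert function of a persistence module. -/
def Hil (M : PersMod k n) (r : Pt n) : ℕ := Module.finrank k (M.X r)

/-- Number of points of `B` (with multiplicity) that are `≤ r`. -/
def countLe (B : Multiset (Pt n)) (r : Pt n) : ℕ := Multiset.card (B.filter (fun i => i ≤ r))

/-- `R` is a free resolution of `M` with barcodes `B j`. -/
def IsFreeRes {M : PersMod k n} (R : Res M) (B : ℕ → Multiset (Pt n)) : Prop :=
  ∀ j, IsFreeWith (R.P j) (B j)

/-- `R` is a minimal free resolution of `M` with barcodes `B j`: in every homological degree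
its term has minimal rank among all free resolutions of `M`. -/
def IsMinFreeRes {M : PersMod k n} (R : Res M) (B : ℕ → Multiset (Pt n)) : Prop :=
  IsFreeRes R B ∧
  ∀ (R' : Res M) (B' : ℕ → Multiset (Pt n)), IsFreeRes R' B' →
    ∀ j, Multiset.card (B j) ≤ Multiset.card (B' j)

/-- Multiset union of the `B j` over even `j ≤ ℓ`. -/
def evenPart (B : ℕ → Multiset (Pt n)) (ℓ : ℕ) : Multiset (Pt n) :=
  ∑ j ∈ Finset.range (ℓ + 1), if Even j then B j else 0

/-- Multiset union of the `B j` over odd `j ≤ ℓ`. -/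
def oddPart (B : ℕ → Multiset (Pt n)) (ℓ : ℕ) : Multiset (Pt n) :=
  ∑ j ∈ Finset.range (ℓ + 1), if ¬ Even j then B j else 0

/-- `S` is the Betti signed barcode of `M`: the pair (even Betti numbers, odd Betti numbers)
coming from a minimal free resolution of `M`. -/
def IsBettiOf (M : PersMod k n) (S : SignedBarcode n) : Prop :=
  ∃ (R : Res M) (B : ℕ → Multiset (Pt n)), IsMinFreeRes R B ∧
    S = (evenPart B R.len, oddPart B R.len)

/-- `(P, Q)` (with barcodes `BP`, `BQ`) is a minimal Hilbert decomposition of `η`. -/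
def IsMinHilbDecomp (η : Pt n → ℤ) (P Q : PersMod k n) (BP BQ : Multiset (Pt n)) : Prop :=
  IsFreeWith P BP ∧ IsFreeWith Q BQ ∧
  (∀ r, η r = (Hil P r : ℤ) - (Hil Q r : ℤ)) ∧
  ∀ x : Pt n, ¬ (x ∈ BP ∧ x ∈ BQ)

/-- The `ℓ¹`-distance on `R^n`. -/
def l1dist (x y : Pt n) : ℝ := ∑ i, |x i - y i|

/-- The 1-Wasserstein cost of a matching (encoded as a multiset of pairs). -/
def matchCost (m : Multiset (Pt n × Pt n)) : ℝ := (m.map fun p => l1dist p.1 p.2).sum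

/-- The 1-Wasserstein distance between barcodes. -/
def wassDist (B C : Multiset (Pt n)) : ℝ≥0∞ :=
  sInf { e : ℝ≥0∞ | ∃ m : Multiset (Pt n × Pt n),
    m.map Prod.fst = B ∧ m.map Prod.snd = C ∧ e = ENNReal.ofReal (matchCost m) }

/-- The signed 1-Wasserstein distance on signed barcodes. -/
def dW1hat (B C : SignedBarcode n) : ℝ≥0∞ := wassDist (B.1 + C.2) (C.1 + B.2)

/-- The reduction of a signed barcode: cancel common points with multiplicity. -/
def reduceSB (B : SignedBarcode n) : SignedBarcode n := (B.1 - B.2, B.2 - B.1)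

/-! For a free resolution `0 → P₁ → P₀ → M → 0` the structure maps of `P₀` are injective, so
`dim P₀(r) ≤ rank M(r ≤ r + 2ε) + dim P₁(r + 2ε)`. An `ε`-interleaving factors that rank through
`N(r + ε)`, whose dimension is `dim Q₀ - dim Q₁` there. Counting bars below a threshold, the
counting function of `ℬ(P₀) + ℬ(Q₁)` at `r` is at most that of `ℬ(Q₀) + ℬ(P₁)` at `r + 2ε`, and
symmetrically. On the real line, two multisets whose counting functions dominate each other up
to a shift by `δ` are `δ`-matched by repeatedly pairing their minima. -/

lemma PersIso.finrank_eq {M N : PersMod k n} (h : PersIso M N) (r : Pt n) :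
    Module.finrank k (M.X r) = Module.finrank k (N.X r) := by
  obtain ⟨f, g, hgf, hfg⟩ := h
  exact (LinearEquiv.ofLinearMap (f.app r) (g.app r) (hfg r) (hgf r)).finrank_eq

lemma PersIso.map_injective {P Q : PersMod k n} (hPQ : PersIso P Q) {r s : Pt n} (h : r ≤ s)
    (hQ : Function.Injective (Q.map h)) : Function.Injective (P.map h) := by
  obtain ⟨f, g, hgf, hfg⟩ := hPQ
  have hP : P.map h = (g.app s).comp ((Q.map h).comp (f.app r)) := by
    rw [← LinearMap.comp_assoc, ← g.natural h, LinearMap.comp_assoc, hgf r, LinearMap.comp_id]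
  have hg : Function.Injective (g.app s) :=
    Function.LeftInverse.injective (g := f.app s) (LinearMap.congr_fun (hfg s))
  have hf : Function.Injective (f.app r) :=
    Function.LeftInverse.injective (g := g.app r) (LinearMap.congr_fun (hgf r))
  rw [hP]
  exact hg.comp (hQ.comp hf)

lemma finrank_freeModFin {m : ℕ} (L : Fin m → Pt n) (r : Pt n) :
    Module.finrank k ((freeModFin (k := k) L).X r) = countLe (List.ofFn L : Multiset (Pt n)) r := by
  rw [countLe, ← Fin.univ_val_map, Multiset.filter_map, Multiset.card_map]
  exact (Module.finrank_pi k).trans (Fintype.card_subtype _)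

lemma freeModFin_map_injective {m : ℕ} (L : Fin m → Pt n) {r s : Pt n} (h : r ≤ s) :
    Function.Injective ((freeModFin (k := k) L).map h) := by
  intro f g hfg
  funext i
  have hrestrict : ∀ f', (freeModFin (k := k) L).map h f' ⟨i.1, i.2.trans h⟩ = f' i :=
    fun _ => dif_pos i.2
  rw [← hrestrict f, ← hrestrict g, hfg]

lemma IsFreeWith.finrank_eq {P : PersMod k n} {B : Multiset (Pt n)} (hP : IsFreeWith P B)
    (r : Pt n) : Module.finrank k (P.X r) = countLe B r := by
  obtain ⟨m, L, rfl, hiso⟩ := hP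
  rw [hiso.finrank_eq, finrank_freeModFin]

lemma IsFreeWith.map_injective {P : PersMod k n} {B : Multiset (Pt n)} (hP : IsFreeWith P B)
    {r s : Pt n} (h : r ≤ s) : Function.Injective (P.map h) := by
  obtain ⟨m, L, -, hiso⟩ := hP
  exact hiso.map_injective h (freeModFin_map_injective L h)

lemma finrank_ker_comp_le_of_injective {U V W : Type*} [AddCommGroup U] [Module k U]
    [AddCommGroup V] [Module k V] [FiniteDimensional k V] [AddCommGroup W] [Module k W]
    (g : V →ₗ[k] W) {m : U →ₗ[k] V} (hm : Function.Injective m) :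
    Module.finrank k (LinearMap.ker (g.comp m)) ≤ Module.finrank k (LinearMap.ker g) :=
  LinearMap.finrank_le_finrank_of_injective (f := m.restrict fun _ hx => hx)
    fun _ _ hxy => Subtype.ext (hm (congrArg Subtype.val hxy))

lemma Res.finrank_add_finrank_one {M : PersMod k n} (R : Res M) (hlen : R.len ≤ 1) (r : Pt n) :
    Module.finrank k (M.X r) + Module.finrank k ((R.P 1).X r)
      = Module.finrank k ((R.P 0).X r) := by
  have hinj : Function.Injective ((R.d 0).app r) := by
    rw [← LinearMap.ker_eq_bot, ← R.exact_succ 0 r, eq_bot_iff]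
    rintro _ ⟨x, rfl⟩
    simp [R.vanish 2 (by omega) r x]
  have h := LinearMap.finrank_range_add_finrank_ker (R.aug.app r)
  rwa [LinearMap.range_eq_top.mpr (R.aug_surj r), finrank_top, ← R.exact_zero r,
    LinearMap.finrank_range_of_inj hinj] at h

lemma Res.finrank_zero_le {M : PersMod k n} (R : Res M) {r s : Pt n} (h : r ≤ s)
    (hinj : Function.Injective ((R.P 0).map h)) :
    Module.finrank k ((R.P 0).X r)
      ≤ Module.finrank k (LinearMap.range (M.map h)) + Module.finrank k ((R.P 1).X s) := by
  set φ := (R.aug.app s).comp ((R.P 0).map h)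
  have hrange : Module.finrank k (LinearMap.range φ)
      ≤ Module.finrank k (LinearMap.range (M.map h)) := by
    rw [show φ = (M.map h).comp (R.aug.app r) from (R.aug.natural h).symm]
    exact Submodule.finrank_mono (LinearMap.range_comp_le_range _ _)
  have hker : Module.finrank k (LinearMap.ker φ) ≤ Module.finrank k ((R.P 1).X s) :=
    calc Module.finrank k (LinearMap.ker φ)
        ≤ Module.finrank k (LinearMap.ker (R.aug.app s)) :=
          finrank_ker_comp_le_of_injective _ hinj
      _ = Module.finrank k (LinearMap.range ((R.d 0).app s)) := by rw [R.exact_zero s]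
      _ ≤ Module.finrank k ((R.P 1).X s) := LinearMap.finrank_range_le _
  have := LinearMap.finrank_range_add_finrank_ker φ
  omega

lemma Interleaved.symm {ε : ℝ} {M N : PersMod k n} (h : Interleaved ε M N) :
    Interleaved ε N M := by
  obtain ⟨hε, f, g, hgf, hfg⟩ := h
  exact ⟨hε, g, f, hfg, hgf⟩

lemma Interleaved.finrank_range_map_le {ε : ℝ} {M N : PersMod k n} (hMN : Interleaved ε M N)
    (r : Pt n) (h : r ≤ shiftPt ε (shiftPt ε r)) :
    Module.finrank k (LinearMap.range (M.map h)) ≤ Module.finrank k (N.X (shiftPt ε r)) := by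
  obtain ⟨_, f, g, hgf, -⟩ := hMN
  rw [← hgf r]
  exact (Submodule.finrank_mono (LinearMap.range_comp_le_range _ _)).trans
    (LinearMap.finrank_range_le _)

lemma countLe_mono (B : Multiset (Pt n)) {r s : Pt n} (h : r ≤ s) :
    countLe B r ≤ countLe B s :=
  Multiset.card_le_card (Multiset.monotone_filter_right B fun _ hr => hr.trans h)

lemma countLe_add (A B : Multiset (Pt n)) (r : Pt n) :
    countLe (A + B) r = countLe A r + countLe B r := by
  rw [countLe, countLe, countLe, Multiset.filter_add, Multiset.card_add]

lemma shiftPt_shiftPt (a b : ℝ) (r : Pt n) : shiftPt a (shiftPt b r) = shiftPt (b + a) r := by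
  funext i
  exact add_assoc _ _ _

lemma Interleaved.countLe_le {ε : ℝ} {M N : PersMod k n} (hMN : Interleaved ε M N)
    (RM : Res M) (RN : Res N) (hRN : RN.len ≤ 1) {B C : ℕ → Multiset (Pt n)}
    (hB : IsFreeRes RM B) (hC : IsFreeRes RN C) (r : Pt n) :
    countLe (B 0 + C 1) r ≤ countLe (C 0 + B 1) (shiftPt (ε + ε) r) := by
  have hr : r ≤ shiftPt ε r := le_shiftPt hMN.1 r
  have hs : shiftPt ε r ≤ shiftPt ε (shiftPt ε r) := le_shiftPt hMN.1 _
  have hM := RM.finrank_zero_le (hr.trans hs) ((hB 0).map_injective _)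
  have hMN' := hMN.finrank_range_map_le r (hr.trans hs)
  have hN := RN.finrank_add_finrank_one hRN (shiftPt ε r)
  rw [(hB 0).finrank_eq, (hB 1).finrank_eq] at hM
  rw [(hC 0).finrank_eq, (hC 1).finrank_eq] at hN
  have hC1 := countLe_mono (C 1) hr
  have hC0 := countLe_mono (C 0) hs
  rw [countLe_add, countLe_add, ← shiftPt_shiftPt]
  omega

section Matching

variable {α : Type*} [AddCommGroup α] [LinearOrder α] {δ : α}
  {U V : Multiset α}

lemma exists_mem_le_add_of_card_filter_le
    (hUV : ∀ t, Multiset.card (U.filter (· ≤ t)) ≤ Multiset.card (V.filter (· ≤ t + δ)))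
    {u : α} (hu : u ∈ U) : ∃ v ∈ V, v ≤ u + δ := by
  have hpos : 0 < Multiset.card (U.filter (· ≤ u)) :=
    Multiset.card_pos_iff_exists_mem.mpr ⟨u, Multiset.mem_filter.mpr ⟨hu, le_rfl⟩⟩
  obtain ⟨v, hv⟩ := Multiset.card_pos_iff_exists_mem.mp (hpos.trans_le (hUV u))
  exact ⟨v, (Multiset.mem_filter.mp hv).1, (Multiset.mem_filter.mp hv).2⟩

lemma card_filter_erase_le [IsOrderedAddMonoid α]
    (hUV : ∀ t, Multiset.card (U.filter (· ≤ t)) ≤ Multiset.card (V.filter (· ≤ t + δ)))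
    {u v : α} (hu : u ∈ U) (hu_min : ∀ y ∈ U, u ≤ y) (hv : v ∈ V) (hvu : v ≤ u + δ) (t : α) :
    Multiset.card ((U.erase u).filter (· ≤ t))
      ≤ Multiset.card ((V.erase v).filter (· ≤ t + δ)) := by
  by_cases ht : u ≤ t
  · have h := hUV t
    rw [← Multiset.cons_erase hu, ← Multiset.cons_erase hv,
      Multiset.filter_cons_of_pos (p := (· ≤ t)) _ ht,
      Multiset.filter_cons_of_pos (p := (· ≤ t + δ)) _ (hvu.trans (add_le_add_left ht δ)),
      Multiset.card_cons, Multiset.card_cons] at h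
    omega
  · rw [Multiset.filter_eq_nil.mpr fun y hy hyt =>
      ht ((hu_min y (Multiset.mem_of_mem_erase hy)).trans hyt)]
    exact Nat.zero_le _

theorem exists_matching_of_card_filter_le [IsOrderedAddMonoid α]
    (hUV : ∀ t, Multiset.card (U.filter (· ≤ t)) ≤ Multiset.card (V.filter (· ≤ t + δ)))
    (hVU : ∀ t, Multiset.card (V.filter (· ≤ t)) ≤ Multiset.card (U.filter (· ≤ t + δ))) :
    ∃ m : Multiset (α × α), m.map Prod.fst = U ∧ m.map Prod.snd = V ∧
      ∀ p ∈ m, |p.1 - p.2| ≤ δ := by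
  induction hcard : Multiset.card U generalizing U V with
  | zero =>
    obtain rfl := Multiset.card_eq_zero.mp hcard
    obtain rfl : V = 0 := Multiset.eq_zero_of_forall_notMem fun v hv => by
      obtain ⟨u, hu, -⟩ := exists_mem_le_add_of_card_filter_le hVU hv
      exact Multiset.notMem_zero u hu
    exact ⟨0, rfl, rfl, by simp⟩
  | succ c ih =>
    obtain ⟨u, hu, hu_min⟩ :=
      Multiset.exists_min_image id (Multiset.card_pos.mp (by omega : 0 < Multiset.card U))
    obtain ⟨v', hv', hv'u⟩ := exists_mem_le_add_of_card_filter_le hUV hu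
    obtain ⟨v, hv, hv_min⟩ := Multiset.exists_min_image id
      (Multiset.card_pos.mp (Multiset.card_pos_iff_exists_mem.mpr ⟨v', hv'⟩))
    obtain ⟨u', hu', hu'v⟩ := exists_mem_le_add_of_card_filter_le hVU hv
    have hvu : v ≤ u + δ := (hv_min v' hv').trans hv'u
    have huv : u ≤ v + δ := (hu_min u' hu').trans hu'v
    obtain ⟨m, hm₁, hm₂, hm⟩ := ih (card_filter_erase_le hUV hu hu_min hv hvu)
      (card_filter_erase_le hVU hv hv_min hu huv)
      (by rw [Multiset.card_erase_of_mem hu, hcard]; rfl)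
    refine ⟨(u, v) ::ₘ m, ?_, ?_, ?_⟩
    · rw [Multiset.map_cons, hm₁, Multiset.cons_erase hu]
    · rw [Multiset.map_cons, hm₂, Multiset.cons_erase hv]
    · intro p hp
      rcases Multiset.mem_cons.mp hp with rfl | hp
      · exact abs_sub_le_iff.mpr ⟨sub_le_iff_le_add'.mpr huv, sub_le_iff_le_add'.mpr hvu⟩
      · exact hm p hp

end Matching

lemma isMatching_of_countLe_le {δ : ℝ} {U V : Multiset (Pt 1)}
    (hUV : ∀ r, countLe U r ≤ countLe V (shiftPt δ r))
    (hVU : ∀ r, countLe V r ≤ countLe U (shiftPt δ r)) : IsMatching δ U V := by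
  let e := OrderIso.funUnique (Fin 1) ℝ
  have hcount : ∀ (W : Multiset (Pt 1)) (t : ℝ),
      Multiset.card ((W.map e).filter (· ≤ t)) = countLe W (e.symm t) := by
    intro W t
    rw [Multiset.filter_map, Multiset.card_map, countLe]
    simp only [Function.comp_def, ← e.le_symm_apply]
  have hshift : ∀ t, shiftPt δ (e.symm t) = e.symm (t + δ) := fun _ => rfl
  obtain ⟨m, hm₁, hm₂, hm⟩ := exists_matching_of_card_filter_le (δ := δ)
    (U := U.map e) (V := V.map e) (fun t => by simpa only [hcount, hshift] using hUV (e.symm t))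
    (fun t => by simpa only [hcount, hshift] using hVU (e.symm t))
  have hback : ∀ W : Multiset (Pt 1), (W.map e).map e.symm = W := fun W => by
    simp only [Multiset.map_map, Function.comp_def, OrderIso.symm_apply_apply, Multiset.map_id']
  refine ⟨m.map (Prod.map e.symm e.symm), ?_, ?_, ?_⟩
  · rw [Multiset.map_map, Prod.map_fst', ← Multiset.map_map, hm₁, hback]
  · rw [Multiset.map_map, Prod.map_snd', ← Multiset.map_map, hm₂, hback]
  · intro p hp
    obtain ⟨q, hq, rfl⟩ := Multiset.mem_map.mp hp
    exact (dist_pi_const q.1 q.2).trans_le ((Real.dist_eq _ _).trans_le (hm q hq))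

theorem one_parameter_betti_stability_general
    {k : Type} [Field k] (ε : ℝ) (M N : PersMod k 1)
    (hMN : Interleaved ε M N)
    (RM : Res M) (RN : Res N) (hRM : RM.len ≤ 1) (hRN : RN.len ≤ 1)
    (B C : ℕ → Multiset (Pt 1))
    (hB : IsMinFreeRes RM B) (hC : IsMinFreeRes RN C) :
    IsMatching (2 * ε) (B 0 + C 1) (C 0 + B 1) := by
  rw [two_mul]
  exact isMatching_of_countLe_le (hMN.countLe_le RM RN hRN hB.1 hC.1)
    (hMN.symm.countLe_le RN RM hRM hC.1 hB.1)

/-- **Remark 3.3** (one-parameter case). If `M, N : R → vec` are finitely presentable and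
`ε`-interleaved, with minimal free resolutions `0 → P₁ → P₀ → M → 0` and
`0 → Q₁ → Q₀ → N → 0`, then there is a `2ε`-bijection between `ℬ(P₀) ∪ ℬ(Q₁)` and
`ℬ(Q₀) ∪ ℬ(P₁)`; that is, `d̂_B(ℬβ(M), ℬβ(N)) ≤ 2 d_I(M, N)`. -/
theorem one_parameter_betti_stability
    {k : Type} [Field k] (ε : ℝ) (hε : 0 ≤ ε) (M N : PersMod k 1)
    (hM : FinitelyPresentable M) (hN : FinitelyPresentable N)
    (hMN : Interleaved ε M N)
    (RM : Res M) (RN : Res N) (hRM : RM.len ≤ 1) (hRN : RN.len ≤ 1)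
    (B C : ℕ → Multiset (Pt 1))
    (hB : IsMinFreeRes RM B) (hC : IsMinFreeRes RN C) :
    IsMatching (2 * ε) (B 0 + C 1) (C 0 + B 1) :=
  one_parameter_betti_stability_general ε M N hMN RM RN hRM hRN B C hB hC

end
end

section
/- Bottleneck instability of minimal Hilbert decompositions (Example 5.4). For every real constant c ≥ 1 there exist finitely presentable 2-parameter persistence modules M and N such that, for the minimal Hilbert decompositions (P*, Q*) of Hil(M) and (P', Q') of Hil(N), one has d̂_B((ℬ(P*), ℬ(Q*)), (ℬ(P'), ℬ(Q'))) > c · d_I(M, N). Specifically, for every ε > 0 and m ∈ ℕ, the module M = ⊕_{j=0}^{m−1} L_{(jε,jε),((j+1)ε,(j+1)ε)} is ε/2-interleaved with the zero module; the pair (F_{(0,0)}, F_{(mε,mε)}) is a minimal Hilbert decomposition of Hil(M); and d̂_B(({(0,0)}, {(mε,mε)}), (∅, ∅)) = mε. -/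
set_option linter.unusedVariables false
set_option maxHeartbeats 800000

open scoped Classical ENNReal

noncomputable section

variable {k : Type} [Field k] {n : ℕ}

/-- The interval module `L_{a,b}` supported on `{x : a ≤ x ∧ ¬ b ≤ x}`. -/
def Lmod (a b : Pt 2) : PersMod k 2 where
  X r := PLift (a ≤ r ∧ ¬ b ≤ r) → k
  fd r := by
    haveI : Finite (PLift (a ≤ r ∧ ¬ b ≤ r)) := Finite.of_subsingleton
    haveI := Fintype.ofFinite (PLift (a ≤ r ∧ ¬ b ≤ r))
    infer_instance
  map {r s} h :=
    { toFun := fun f hs => if hr : (a ≤ r ∧ ¬ b ≤ r) then f ⟨hr⟩ else 0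
      map_add' := by
        intro f g; funext hs
        by_cases hr : (a ≤ r ∧ ¬ b ≤ r) <;> simp [hr]
      map_smul' := by
        intro c f; funext hs
        by_cases hr : (a ≤ r ∧ ¬ b ≤ r) <;> simp [hr] }
  map_id r := by
    apply LinearMap.ext; intro f; funext hs
    show (if hr : (a ≤ r ∧ ¬ b ≤ r) then f ⟨hr⟩ else 0) = f hs
    rw [dif_pos hs.down]
  map_comp {r s t} h₁ h₂ := by
    apply LinearMap.ext; intro f; funext ht
    show (if hs : (a ≤ s ∧ ¬ b ≤ s) then
            (if hr : (a ≤ r ∧ ¬ b ≤ r) then f ⟨hr⟩ else 0) else 0)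
        = (if hr : (a ≤ r ∧ ¬ b ≤ r) then f ⟨hr⟩ else 0)
    by_cases hr : (a ≤ r ∧ ¬ b ≤ r)
    · have hs : (a ≤ s ∧ ¬ b ≤ s) :=
        ⟨hr.1.trans h₁, fun hb => ht.down.2 (hb.trans h₂)⟩
      simp [hr, hs]
    · simp [hr]

/-- The point `(c, c)`. -/
def constPt (c : ℝ) : Pt 2 := fun _ => c

/-- The module `M = ⊕_{j=0}^{m-1} L_{(jε,jε),((j+1)ε,(j+1)ε)}` of Example 5.4. -/
def Mex (k : Type) [Field k] (ε : ℝ) (m : ℕ) : PersMod k 2 :=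
  dsumFin fun j : Fin m =>
    Lmod (constPt ((j : ℕ) * ε)) (constPt (((j : ℕ) + 1) * ε))

/-! Each summand `L_{(jε,jε),((j+1)ε,(j+1)ε)}` of `Mex k ε m` is killed by the structure maps of
length `ε`, so `Mex k ε m` is `ε/2`-interleaved with `0`. Its Hilbert function, however,
telescopes to `Hil F_{(0,0)} - Hil F_{(mε,mε)}`, and against the empty decomposition of `Hil 0`
the bottleneck dissimilarity must match the positive bar `(0,0)` with the negative bar
`(mε,mε)`, at cost `mε`. Taking `ε = 1` and `m > c` beats any constant `c`. -/

def PersHom.id (M : PersMod k n) : PersHom M M := ⟨fun _ => LinearMap.id, fun _ => rfl⟩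

instance (M N : PersMod k n) : Zero (PersHom M N) := ⟨⟨fun _ => 0, fun _ => by simp⟩⟩

lemma PersIso.refl (M : PersMod k n) : PersIso M M :=
  ⟨PersHom.id M, PersHom.id M, fun _ => rfl, fun _ => rfl⟩

lemma isFreeWith_freeModFin {m : ℕ} (L : Fin m → Pt n) :
    IsFreeWith (freeModFin L : PersMod k n) (List.ofFn L) :=
  ⟨m, L, rfl, PersIso.refl _⟩

lemma isFreeWith_zeroMod : IsFreeWith (zeroMod : PersMod k n) 0 :=
  ⟨0, Fin.elim0, by simp, PersIso.refl _⟩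

open Finset in
lemma hil_freeModFin {m : ℕ} (L : Fin m → Pt n) (r : Pt n) :
    Hil (freeModFin L : PersMod k n) r = #{i | L i ≤ r} :=
  (Module.finrank_fintype_fun_eq_card k).trans (Fintype.card_subtype _)

lemma hil_freeModFin_single (a r : Pt n) :
    Hil (freeModFin fun _ : Fin 1 => a : PersMod k n) r = if a ≤ r then 1 else 0 := by
  rw [hil_freeModFin]
  split_ifs with h <;> simp [h]

lemma hil_zeroMod (r : Pt n) : Hil (zeroMod : PersMod k n) r = 0 := by
  simp [zeroMod, hil_freeModFin]

instance subsingleton_zeroMod (r : Pt n) : Subsingleton ((zeroMod : PersMod k n).X r) :=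
  inferInstanceAs (Subsingleton ({i : Fin 0 // _} → k))

lemma hil_dsumFin {m : ℕ} (P : Fin m → PersMod k n) (r : Pt n) :
    Hil (dsumFin P) r = ∑ j, Hil (P j) r :=
  Module.finrank_pi_fintype k

lemma dsumFin_map_eq_zero {m : ℕ} {P : Fin m → PersMod k n} {r s : Pt n} (h : r ≤ s)
    (hP : ∀ j, (P j).map h = 0) : (dsumFin P).map h = 0 := by
  refine LinearMap.ext fun x => funext fun j => ?_
  show (P j).map h (x j) = 0
  rw [hP j, LinearMap.zero_apply]

lemma isMinHilbDecomp_self {P : PersMod k n} {B : Multiset (Pt n)} (hP : IsFreeWith P B) :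
    IsMinHilbDecomp (fun r => (Hil P r : ℤ)) P (zeroMod : PersMod k n) B 0 :=
  ⟨hP, isFreeWith_zeroMod, fun r => by simp [hil_zeroMod], fun _ h => by simp at h⟩

lemma finitelyPresentable_zeroMod : FinitelyPresentable (zeroMod : PersMod k n) :=
  ⟨0, 0, Fin.elim0, Fin.elim0, PersHom.id _, PersHom.id _, fun _ => Function.surjective_id,
    fun r => by
      ext y
      exact iff_of_true ⟨y, rfl⟩ (Subsingleton.elim (α := (zeroMod : PersMod k n).X r) _ _)⟩

lemma interleavingDist_le {M N : PersMod k n} {ε : ℝ} (h : Interleaved ε M N) :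
    interleavingDist M N ≤ ENNReal.ofReal ε :=
  sInf_le ⟨ε, rfl, h⟩

lemma interleaved_zeroMod_of_map_eq_zero {M : PersMod k n} {ε : ℝ} (hε : 0 ≤ ε)
    (hM : ∀ r, M.map ((le_shiftPt hε r).trans (le_shiftPt hε _)) = 0) :
    Interleaved ε M zeroMod :=
  ⟨hε, 0, 0, fun r => (hM r).symm, fun _ => Subsingleton.elim _ _⟩

lemma bottleneckDist_singleton (a b : Pt n) :
    bottleneckDist {a} {b} = ENNReal.ofReal (dist a b) := by
  apply le_antisymm
  · exact sInf_le ⟨dist a b, dist_nonneg, rfl, {(a, b)}, by simp, by simp, by simp⟩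
  · refine le_sInf ?_
    rintro _ ⟨ε, -, rfl, μ, hfst, hsnd, hdist⟩
    obtain ⟨p, rfl⟩ : ∃ p, μ = {p} :=
      Multiset.card_eq_one.mp (by simpa using congrArg Multiset.card hfst)
    simp only [Multiset.map_singleton, Multiset.singleton_inj] at hfst hsnd
    subst hfst hsnd
    exact ENNReal.ofReal_le_ofReal (hdist p (Multiset.mem_singleton_self p))

lemma dBhat_singleton_zero (a b : Pt n) :
    dBhat ({a}, {b}) (0, 0) = ENNReal.ofReal (dist a b) := by
  simp only [dBhat, add_zero, zero_add]
  exact bottleneckDist_singleton a b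

section IntervalModules

lemma hil_Lmod (a b r : Pt 2) :
    Hil (Lmod a b : PersMod k 2) r = if a ≤ r ∧ ¬ b ≤ r then 1 else 0 := by
  show Module.finrank k (PLift _ → k) = _
  rw [Module.finrank_fintype_fun_eq_card]
  split_ifs with h <;> simp [h]

lemma Lmod_map_eq_zero {a b r s : Pt 2} (h : r ≤ s) (hab : a ≤ r → b ≤ s) :
    (Lmod a b : PersMod k 2).map h = 0 := by
  refine LinearMap.ext fun x => funext fun hs => ?_
  show (if hr : a ≤ r ∧ ¬ b ≤ r then x ⟨hr⟩ else 0) = 0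
  exact dif_neg fun hr => hs.down.2 (hab hr.1)

variable {m : ℕ}

def freeModFinHomOfLE {a b : Fin m → Pt n} (hab : ∀ j, a j ≤ b j) :
    PersHom (freeModFin b : PersMod k n) (freeModFin a) where
  app r :=
    { toFun := fun f i => if hb : b i.1 ≤ r then f ⟨i.1, hb⟩ else 0
      map_add' := fun f g => funext fun i => by
        show (if hb : b i.1 ≤ r then f ⟨i.1, hb⟩ + g ⟨i.1, hb⟩ else 0)
          = (if hb : b i.1 ≤ r then f ⟨i.1, hb⟩ else 0) + if hb : b i.1 ≤ r then g ⟨i.1, hb⟩ else 0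
        split_ifs <;> simp
      map_smul' := fun c f => funext fun i => by
        show (if hb : b i.1 ≤ r then c * f ⟨i.1, hb⟩ else 0)
          = c * if hb : b i.1 ≤ r then f ⟨i.1, hb⟩ else 0
        split_ifs <;> simp }
  natural {r s} h := LinearMap.ext fun f => funext fun i => by
    show (if ha : a i.1 ≤ r then (if hb : b i.1 ≤ r then f ⟨i.1, hb⟩ else 0) else 0)
      = if hb : b i.1 ≤ s then (if hb' : b i.1 ≤ r then f ⟨i.1, hb'⟩ else 0) else 0
    by_cases hb : b i.1 ≤ r
    · rw [dif_pos ((hab i.1).trans hb), dif_pos hb, dif_pos (hb.trans h)]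
    · simp [hb]

def freeModFinToLmodSum (a b : Fin m → Pt 2) :
    PersHom (freeModFin a : PersMod k 2) (dsumFin fun j => Lmod (a j) (b j)) where
  app r :=
    { toFun := fun f j hp => f ⟨j, hp.down.1⟩
      map_add' := fun _ _ => rfl
      map_smul' := fun _ _ => rfl }
  natural {r s} h := LinearMap.ext fun f => funext fun j => funext fun hs => by
    show (if hr : a j ≤ r ∧ ¬ b j ≤ r then f ⟨j, hr.1⟩ else 0)
      = if ha : a j ≤ r then f ⟨j, ha⟩ else 0
    have hbr : ¬ b j ≤ r := fun hb => hs.down.2 (hb.trans h)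
    by_cases ha : a j ≤ r
    · rw [dif_pos ⟨ha, hbr⟩, dif_pos ha]
    · rw [dif_neg fun hr => ha hr.1, dif_neg ha]

lemma freeModFinToLmodSum_surjective (a b : Fin m → Pt 2) (r : Pt 2) :
    Function.Surjective ((freeModFinToLmodSum a b : PersHom _ (dsumFin _ : PersMod k 2)).app r) :=
  fun y => ⟨fun i => if hb : b i.1 ≤ r then 0 else y i.1 ⟨i.2, hb⟩,
    funext fun j => funext fun hp => dif_neg hp.down.2⟩

lemma range_freeModFinHomOfLE {a b : Fin m → Pt 2} (hab : ∀ j, a j ≤ b j) (r : Pt 2) :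
    LinearMap.range ((freeModFinHomOfLE hab : PersHom _ (freeModFin a : PersMod k 2)).app r)
      = LinearMap.ker ((freeModFinToLmodSum a b).app r) := by
  ext f
  constructor
  · rintro ⟨g, rfl⟩
    exact funext fun j => funext fun hp => dif_neg hp.down.2
  · intro hf
    refine ⟨fun i => f ⟨i.1, (hab i.1).trans i.2⟩, funext fun i => ?_⟩
    show (if hb : b i.1 ≤ r then f ⟨i.1, (hab i.1).trans hb⟩ else 0) = f i
    by_cases hb : b i.1 ≤ r
    · rw [dif_pos hb]
    · rw [dif_neg hb]
      exact (congrFun (congrFun hf i.1) ⟨i.2, hb⟩).symm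

lemma finitelyPresentable_dsumFin_Lmod {a b : Fin m → Pt 2} (hab : ∀ j, a j ≤ b j) :
    FinitelyPresentable (dsumFin fun j => Lmod (a j) (b j) : PersMod k 2) :=
  ⟨m, m, b, a, freeModFinHomOfLE hab, freeModFinToLmodSum a b,
    freeModFinToLmodSum_surjective a b, range_freeModFinHomOfLE hab⟩

end IntervalModules

lemma hil_dsumFin_Lmod_chain {a : ℕ → Pt 2} (ha : Monotone a) (m : ℕ) (r : Pt 2) :
    (Hil (dsumFin fun j : Fin m => Lmod (a j) (a (j + 1)) : PersMod k 2) r : ℤ)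
      = (if a 0 ≤ r then 1 else 0) - if a m ≤ r then 1 else 0 := by
  set χ : ℕ → ℤ := fun j => if a j ≤ r then 1 else 0
  have hstep : ∀ j, (Hil (Lmod (a j) (a (j + 1)) : PersMod k 2) r : ℤ) = χ j - χ (j + 1) := by
    intro j
    have hmono : a (j + 1) ≤ r → a j ≤ r := (ha j.le_succ).trans
    rw [hil_Lmod]
    by_cases h1 : a j ≤ r <;> by_cases h2 : a (j + 1) ≤ r <;> simp_all [χ]
  rw [hil_dsumFin, Nat.cast_sum]
  simp only [hstep]
  exact (Fin.sum_univ_eq_sum_range (fun j => χ j - χ (j + 1)) m).trans (Finset.sum_range_sub' χ m)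

lemma constPt_mono : Monotone constPt := fun _ _ h _ => h

lemma Mex_eq_dsumFin (ε : ℝ) (m : ℕ) :
    Mex k ε m = dsumFin fun j : Fin m =>
      Lmod (constPt ((j : ℕ) * ε)) (constPt (((j + 1 : ℕ) : ℝ) * ε)) := by
  simp only [Nat.cast_succ]
  rfl

lemma hil_Mex {ε : ℝ} (hε : 0 ≤ ε) (m : ℕ) (r : Pt 2) :
    (Hil (Mex k ε m) r : ℤ) = Hil (freeModFin fun _ : Fin 1 => constPt 0 : PersMod k 2) r
      - Hil (freeModFin fun _ : Fin 1 => constPt ((m : ℝ) * ε) : PersMod k 2) r := by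
  have hmono : Monotone fun j : ℕ => constPt (j * ε) :=
    constPt_mono.comp fun i j h => mul_le_mul_of_nonneg_right (Nat.cast_le.2 h) hε
  rw [Mex_eq_dsumFin, hil_dsumFin_Lmod_chain hmono, hil_freeModFin_single,
    hil_freeModFin_single, Nat.cast_zero, zero_mul]
  push_cast
  rfl

lemma Mex_map_eq_zero (ε : ℝ) (m : ℕ) {r s : Pt 2} (h : r ≤ s) (hrs : ∀ i, r i + ε ≤ s i) :
    (Mex k ε m).map h = 0 :=
  dsumFin_map_eq_zero h fun j => Lmod_map_eq_zero h fun hj i => by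
    have hji : (j : ℕ) * ε ≤ r i := hj i
    show ((j : ℕ) + 1) * ε ≤ s i
    linarith [hrs i]

lemma interleaved_Mex_zeroMod {ε : ℝ} (hε : 0 ≤ ε) (m : ℕ) :
    Interleaved (ε / 2) (Mex k ε m) zeroMod :=
  interleaved_zeroMod_of_map_eq_zero (by linarith) fun r =>
    Mex_map_eq_zero ε m _ fun i => by simp only [shiftPt]; linarith

lemma finitelyPresentable_Mex {ε : ℝ} (hε : 0 ≤ ε) (m : ℕ) : FinitelyPresentable (Mex k ε m) :=
  finitelyPresentable_dsumFin_Lmod fun j => constPt_mono (by nlinarith)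

lemma isMinHilbDecomp_Mex {ε : ℝ} (hε : 0 < ε) {m : ℕ} (hm : 1 ≤ m) :
    IsMinHilbDecomp (fun r => (Hil (Mex k ε m) r : ℤ))
      (freeModFin fun _ : Fin 1 => constPt 0 : PersMod k 2)
      (freeModFin fun _ : Fin 1 => constPt ((m : ℝ) * ε) : PersMod k 2)
      {constPt 0} {constPt ((m : ℝ) * ε)} := by
  refine ⟨isFreeWith_freeModFin _, isFreeWith_freeModFin _, hil_Mex hε.le m, ?_⟩
  rintro x ⟨h0, hmε⟩
  rw [Multiset.mem_singleton] at h0 hmε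
  have hpos : 0 < (m : ℝ) * ε := mul_pos (by exact_mod_cast hm) hε
  exact hpos.ne (congrFun (h0.symm.trans hmε) 0)

lemma dBhat_Mex_barcode {ε : ℝ} (hε : 0 ≤ ε) (m : ℕ) :
    dBhat ({constPt 0}, {constPt ((m : ℝ) * ε)}) (0, 0) = ENNReal.ofReal ((m : ℝ) * ε) := by
  rw [dBhat_singleton_zero]
  show ENNReal.ofReal (dist (fun _ : Fin 2 => (0 : ℝ)) fun _ => (m : ℝ) * ε) = _
  rw [dist_pi_const, dist_comm, Real.dist_0_eq_abs, abs_of_nonneg (by positivity)]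

/-- **Example 5.4** (bottleneck instability of minimal Hilbert decompositions).
There is no constant `c ≥ 1` with `d̂_B(ĤB(M), ĤB(N)) ≤ c · d_I(M, N)`; specifically,
for `ε > 0` and `m ≥ 1`, the module `M = ⊕_j L_{(jε,jε),((j+1)ε,(j+1)ε)}` is
`ε/2`-interleaved with `0`, the pair `(F_{(0,0)}, F_{(mε,mε)})` is a minimal Hilbert
decomposition of `Hil(M)`, and `d̂_B(({(0,0)}, {(mε,mε)}), (∅, ∅)) = mε`. -/
theorem minimal_hilbert_decomposition_bottleneck_instability (k : Type) [Field k] :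
    (∀ c : ℝ, 1 ≤ c → ∃ (M N : PersMod k 2),
      FinitelyPresentable M ∧ FinitelyPresentable N ∧
      ∃ (P Q P' Q' : PersMod k 2) (BP BQ BP' BQ' : Multiset (Pt 2)),
        IsMinHilbDecomp (fun r => (Hil M r : ℤ)) P Q BP BQ ∧
        IsMinHilbDecomp (fun r => (Hil N r : ℤ)) P' Q' BP' BQ' ∧
        ENNReal.ofReal c * interleavingDist M N < dBhat (BP, BQ) (BP', BQ')) ∧
    (∀ ε : ℝ, 0 < ε → ∀ m : ℕ, 1 ≤ m →
      Interleaved (ε / 2) (Mex k ε m) (zeroMod : PersMod k 2) ∧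
      IsMinHilbDecomp (fun r => (Hil (Mex k ε m) r : ℤ))
        (freeModFin (fun _ : Fin 1 => constPt 0) : PersMod k 2)
        (freeModFin (fun _ : Fin 1 => constPt ((m : ℝ) * ε)) : PersMod k 2)
        ({constPt 0} : Multiset (Pt 2)) ({constPt ((m : ℝ) * ε)} : Multiset (Pt 2)) ∧
      dBhat (({constPt 0} : Multiset (Pt 2)), ({constPt ((m : ℝ) * ε)} : Multiset (Pt 2)))
          (0, 0)
        = ENNReal.ofReal ((m : ℝ) * ε)) := by
  refine ⟨fun c hc => ?_, fun ε hε m hm =>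
    ⟨interleaved_Mex_zeroMod hε.le m, isMinHilbDecomp_Mex hε hm, dBhat_Mex_barcode hε.le m⟩⟩
  obtain ⟨m, hcm⟩ := exists_nat_gt c
  have hm : 1 ≤ m := by exact_mod_cast (hc.trans hcm.le)
  refine ⟨Mex k 1 m, zeroMod, finitelyPresentable_Mex zero_le_one m, finitelyPresentable_zeroMod,
    _, _, _, _, _, _, _, _, isMinHilbDecomp_Mex one_pos hm,
    isMinHilbDecomp_self isFreeWith_zeroMod, ?_⟩
  rw [dBhat_Mex_barcode zero_le_one, mul_one]
  calc ENNReal.ofReal c * interleavingDist (Mex k 1 m) zeroMod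
      ≤ ENNReal.ofReal c * ENNReal.ofReal (1 / 2) := by
        gcongr
        exact interleavingDist_le (interleaved_Mex_zeroMod zero_le_one m)
    _ = ENNReal.ofReal (c / 2) := by rw [← ENNReal.ofReal_mul (by linarith)]; ring_nf
    _ < ENNReal.ofReal m := (ENNReal.ofReal_lt_ofReal_iff (by positivity)).2 (by linarith)

end
end
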